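/- The theory SAPP is not finitely axiomatizable: there is no finite set Γ of L-sentences such that for every L-structure M, M ⊨ Γ if and only if M ⊨ SAPP. -/

import Mathlib

open FirstOrder Language Structure BoundedFormula

/-- The relation symbols of the language `L`: a single binary relation `O`. -/
inductive PerpRel : ℕ → Type
  | o : PerpRel 2

/-- The first-order language with a single binary relation symbol `O`. -/
def L : Language := ⟨fun _ => Empty, PerpRel⟩
  deriving IsRelational

/-- The binary relation symbol `O` of `L`. -/
abbrev oSym : L.Relations 2 := .o

/-- `O(xᵢ, xⱼ)` as a bounded formula. -/
def oBF {n : ℕ} (i j : Fin n) : L.BoundedFormula Empty n :=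
  oSym.boundedFormula₂ (&i) (&j)

/-- Finite conjunction of a list of bounded formulas. -/
def andAll {n : ℕ} : List (L.BoundedFormula Empty n) → L.BoundedFormula Empty n
  | [] => ⊤
  | φ :: l => φ ⊓ andAll l

/-- λ₁ₙ : ∀y₁…∀yₙ∀s(O(s,y₁) ∧ … ∧ O(s,yₙ) → ∃t(t ≠ y₁ ∧ … ∧ t ≠ yₙ ∧ O(s,t))).
Variables: y₁,…,yₙ are de Bruijn indices 0,…,n-1, s is index n, t is index n+1. -/
def lam1 (n : ℕ) : L.Sentence :=
  ((andAll ((List.finRange n).map fun i => oBF (Fin.last n) i.castSucc)).imp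
    ((andAll ((List.finRange n).map fun i =>
        ∼((&(Fin.last (n + 1))) =' (&(i.castSucc.castSucc)))) ⊓
      oBF ((Fin.last n).castSucc) (Fin.last (n + 1))).ex)).alls

/-- λ₂ₙ : ∀y₁…∀yₙ∃s(¬O(s,y₁) ∧ … ∧ ¬O(s,yₙ)).
Variables: y₁,…,yₙ are de Bruijn indices 0,…,n-1, s is index n. -/
def lam2 (n : ℕ) : L.Sentence :=
  ((andAll ((List.finRange n).map fun i => ∼(oBF (Fin.last n) i.castSucc))).ex).alls

/-- λ₃ : ∀x ¬O(x,x). -/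
def lam3 : L.Sentence := (∼(oBF (0 : Fin 1) 0)).alls

/-- λ₄ : ∀x∀y(O(x,y) → O(y,x)). -/
def lam4 : L.Sentence := ((oBF (0 : Fin 2) 1).imp (oBF (1 : Fin 2) 0)).alls

/-- λ₅ : ∀x∃y O(x,y). -/
def lam5 : L.Sentence := ((oBF (0 : Fin 2) 1).ex).alls

/-- λ₆ : ∀x∀y∀z∀t(O(x,z) ∧ O(y,z) ∧ O(x,t) → O(y,t)). -/
def lam6 : L.Sentence :=
  ((oBF (0 : Fin 4) 2 ⊓ oBF (1 : Fin 4) 2 ⊓ oBF (0 : Fin 4) 3).imp (oBF (1 : Fin 4) 3)).alls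

/-- The theory SAPP. -/
def SAPP : L.Theory :=
  {φ | ∃ n, 1 ≤ n ∧ φ = lam1 n} ∪ {φ | ∃ n, 2 ≤ n ∧ φ = lam2 n} ∪ {lam3, lam4, lam5, lam6}

/-!
For `k ≥ 1` let `Bicliques k` be `k` disjoint copies of the complete bipartite graph on two
countably infinite sides, with `O` as adjacency. It satisfies every axiom of SAPP except `λ₂ₙ` for
`n ≥ 2k`: every point is adjacent to the representative of the opposite side of its own block, so
no point avoids a set of representatives of all `2k` sides. Hence every axiom of SAPP holds in all
but finitely many of these structures, none of which is a model of SAPP, and by compactness no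
finite set of sentences can have the same models as SAPP.
-/

namespace FirstOrder.Language.Theory

universe u v

variable {L : Language.{u, v}}

def IsFinitelyAxiomatizable (T : L.Theory) : Prop :=
  ∃ Γ : Finset L.Sentence, ∀ (M : Type (max u v)) [L.Structure M] [Nonempty M],
    M ⊨ (Γ : L.Theory) ↔ M ⊨ T

theorem not_isFinitelyAxiomatizable_of_eventually {T : L.Theory} {ι : Type*} {l : Filter ι}
    [l.NeBot] (M : ι → Type (max u v)) [∀ i, L.Structure (M i)] [∀ i, Nonempty (M i)]
    (h_eventually : ∀ φ ∈ T, ∀ᶠ i in l, M i ⊨ φ) (h_not_model : ∀ i, ¬ M i ⊨ T) :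
    ¬ T.IsFinitelyAxiomatizable := by
  rintro ⟨Γ, hΓ⟩
  let φ : L.Sentence := Formula.iInf fun γ : Γ => (γ : L.Sentence)
  have realize_φ (N : Type (max u v)) [L.Structure N] : N ⊨ φ ↔ N ⊨ (Γ : L.Theory) := by
    simp [φ, Sentence.Realize, model_iff]
  obtain ⟨T₀, hT₀T, hT₀φ⟩ := models_iff_finset_models.1 <|
    models_sentence_iff.2 fun N => (realize_φ N).2 ((hΓ N).2 N.is_model)
  obtain ⟨i, hi⟩ := ((Filter.eventually_all_finset T₀).2 fun ψ hψ =>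
    h_eventually ψ (hT₀T hψ)).exists
  have : M i ⊨ (T₀ : L.Theory) := (model_iff _).2 hi
  exact h_not_model i <| (hΓ (M i)).1 <| (realize_φ (M i)).1 <|
    models_sentence_iff.1 hT₀φ (ModelType.of _ (M i))

end FirstOrder.Language.Theory

section Semantics

variable {M : Type*} [L.Structure M]

def oRel (a b : M) : Prop := RelMap oSym ![a, b]

@[simp] theorem realize_oBF {n : ℕ} (i j : Fin n) (v : Empty → M) (xs : Fin n → M) :
    (oBF i j).Realize v xs ↔ oRel (xs i) (xs j) := by
  simp [oBF, oRel]

@[simp] theorem realize_andAll {n : ℕ} {l : List (L.BoundedFormula Empty n)} {v : Empty → M}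
    {xs : Fin n → M} : (andAll l).Realize v xs ↔ ∀ φ ∈ l, φ.Realize v xs := by
  induction l with
  | nil => simp [andAll]
  | cons φ l ih => simp [andAll, ih]

theorem realize_lam1_iff (n : ℕ) : M ⊨ lam1 n ↔
    ∀ (y : Fin n → M) (s : M), (∀ i, oRel s (y i)) → ∃ t, (∀ i, t ≠ y i) ∧ oRel s t := by
  simp only [Sentence.Realize, lam1, Function.comp_apply, realize_alls, realize_imp,
    realize_andAll, List.mem_map, List.mem_finRange, true_and, forall_exists_index,
    forall_apply_eq_imp_iff, realize_oBF, realize_ex, Nat.succ_eq_add_one, realize_inf, realize_not,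
    realize_bdEqual, Term.realize_var, Sum.elim_inr, Fin.snoc_last, Fin.snoc_castSucc, ne_eq]
  exact ⟨fun h y s => by simpa using h (Fin.snoc y s), fun h xs => h _ _⟩

theorem realize_lam2_iff (n : ℕ) : M ⊨ lam2 n ↔ ∀ y : Fin n → M, ∃ s, ∀ i, ¬ oRel s (y i) := by
  simp [lam2, Sentence.Realize]

theorem realize_lam3_iff : M ⊨ lam3 ↔ ∀ x : M, ¬ oRel x x := by
  simp [lam3, Sentence.Realize, Fin.forall_fin_succ_pi]

theorem realize_lam4_iff : M ⊨ lam4 ↔ ∀ x y : M, oRel x y → oRel y x := by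
  simp [lam4, Sentence.Realize, Fin.forall_fin_succ_pi]

theorem realize_lam5_iff : M ⊨ lam5 ↔ ∀ x : M, ∃ y, oRel x y := by
  simp only [Sentence.Realize, lam5, realize_alls, realize_ex, realize_oBF, Fin.snoc_apply_zero,
    Fin.forall_fin_succ_pi, Fin.cons_zero, Fin.forall_fin_zero_pi]
  rfl

theorem realize_lam6_iff :
    M ⊨ lam6 ↔ ∀ x y z t : M, oRel x z → oRel y z → oRel x t → oRel y t := by
  simp only [Sentence.Realize, lam6, realize_alls, realize_imp, realize_inf, realize_oBF, and_imp,
    Fin.forall_fin_succ_pi, Fin.cons_zero, Fin.cons_one, Fin.forall_fin_zero_pi]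
  rfl

end Semantics

def Bicliques (k : ℕ) : Type := Fin k × Bool × ℕ

namespace Bicliques

open Filter

variable {k : ℕ}

def Adj (x y : Bicliques k) : Prop := x.1 = y.1 ∧ x.2.1 ≠ y.2.1

instance : L.Structure (Bicliques k) where
  RelMap | .o, x => Adj (x 0) (x 1)

instance [NeZero k] : Nonempty (Bicliques k) := ⟨(0, false, 0)⟩

theorem realize_lam1 (n : ℕ) : Bicliques k ⊨ lam1 n := by
  refine (realize_lam1_iff n).2 fun y s _ => ?_
  obtain ⟨m, hm⟩ := Infinite.exists_notMem_finset (Finset.univ.image fun i => (y i).2.2)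
  refine ⟨(s.1, !s.2.1, m), fun i hi => hm ?_, rfl, by simp⟩
  exact Finset.mem_image.2 ⟨i, Finset.mem_univ _, by rw [← hi]⟩

theorem realize_lam2 {n : ℕ} (hn : n < 2 * k) : Bicliques k ⊨ lam2 n := by
  refine (realize_lam2_iff n).2 fun y => ?_
  have : ¬ Function.Surjective fun i => ((y i).1, (y i).2.1) := fun hsurj => by
    have := Fintype.card_le_of_surjective _ hsurj
    simp only [Fintype.card_fin, Fintype.card_prod, Fintype.card_bool] at this
    omega
  obtain ⟨⟨b, c⟩, hbc⟩ := not_forall.1 this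
  exact ⟨(b, !c, 0), fun i ⟨hb, hc⟩ => hbc ⟨i, Prod.ext hb.symm (by simpa using hc.symm)⟩⟩

theorem not_realize_lam2 : ¬ Bicliques k ⊨ lam2 (2 * k) := by
  let e : Fin k × Bool ≃ Fin (2 * k) := Fintype.equivFinOfCardEq (by simp [mul_comm])
  intro h
  obtain ⟨s, hs⟩ := (realize_lam2_iff _).1 h fun i => ((e.symm i).1, (e.symm i).2, 0)
  exact hs (e (s.1, !s.2.1)) (by rw [e.symm_apply_apply]; exact ⟨rfl, by simp⟩)

theorem realize_lam3 : Bicliques k ⊨ lam3 :=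
  realize_lam3_iff.2 fun _ h => h.2 rfl

theorem realize_lam4 : Bicliques k ⊨ lam4 :=
  realize_lam4_iff.2 fun _ _ h => ⟨h.1.symm, h.2.symm⟩

theorem realize_lam5 : Bicliques k ⊨ lam5 :=
  realize_lam5_iff.2 fun x => ⟨(x.1, !x.2.1, 0), rfl, by simp⟩

theorem realize_lam6 : Bicliques k ⊨ lam6 := by
  refine realize_lam6_iff.2 fun x y z t (hxz : Adj x z) (hyz : Adj y z) (hxt : Adj x t) => ?_
  have hside : y.2.1 = x.2.1 := (Bool.eq_not.2 hyz.2).trans (Bool.eq_not.2 hxz.2).symm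
  exact ⟨hyz.1.trans (hxz.1.symm.trans hxt.1), hside ▸ hxt.2⟩

theorem eventually_realize_of_mem_SAPP {φ : L.Sentence} (hφ : φ ∈ SAPP) :
    ∀ᶠ k in atTop, Bicliques k ⊨ φ := by
  rcases hφ with (⟨n, -, rfl⟩ | ⟨n, -, rfl⟩) | hφ
  · exact .of_forall fun _ => realize_lam1 n
  · filter_upwards [eventually_gt_atTop n] with k hk using realize_lam2 (by omega)
  · simp only [Set.mem_insert_iff, Set.mem_singleton_iff] at hφ
    rcases hφ with rfl | rfl | rfl | rfl
    exacts [.of_forall fun _ => realize_lam3, .of_forall fun _ => realize_lam4,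
      .of_forall fun _ => realize_lam5, .of_forall fun _ => realize_lam6]

theorem not_model_SAPP (k : ℕ) [NeZero k] : ¬ Bicliques k ⊨ SAPP := fun h =>
  not_realize_lam2 <| h.realize_of_mem _ <|
    Or.inl <| Or.inr ⟨2 * k, by have := NeZero.ne k; omega, rfl⟩

end Bicliques

/-- SAPP is not finitely axiomatizable: no finite set Γ of L-sentences has
exactly the same models as SAPP. -/
theorem statement_16 :
    ¬ ∃ Γ : Finset L.Sentence, ∀ (M : Type) [L.Structure M] [Nonempty M],
      ((M ⊨ (↑Γ : L.Theory)) ↔ M ⊨ SAPP) :=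
  Theory.not_isFinitelyAxiomatizable_of_eventually (l := Filter.atTop)
    (fun k => Bicliques (k + 1))
    (fun _ hφ => (Filter.tendsto_add_atTop_nat 1).eventually
      (Bicliques.eventually_realize_of_mem_SAPP hφ))
    (fun k => Bicliques.not_model_SAPP (k + 1))
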